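/- Let α ∈ (0,1) and r > 0. Then the series Σ_{n=1}^∞ (Γ(nα+1)/Γ(n+1))·(1 - e^{-2iπnα})·r^{n(1-α)-1} converges and G_α(-r^+) = (2πi)^{-1} Σ_{n=1}^∞ (Γ(nα+1)/Γ(n+1))·(1 - e^{-2iπnα})·r^{n(1-α)-1}, where Γ is the Gamma function. -/

import Mathlib

open MeasureTheory Complex Set Filter

/-- The function `G_α` from Fourati's paper: for `z` in the slit plane,
`G_α(z) = (2πi)⁻¹ ∫_0^∞ (exp(-e^{-iπα} y^α z^{1-α}) - exp(-e^{iπα} y^α z^{1-α})) z⁻¹ e^{-y} dy`,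
all complex powers being principal branches. -/
noncomputable def Galpha (α : ℝ) (z : ℂ) : ℂ :=
  (2 * Real.pi * Complex.I)⁻¹ *
    ∫ y in Set.Ioi (0:ℝ),
      ((Complex.exp (-(Complex.exp (-(Real.pi * α : ℂ) * Complex.I)) * (y:ℂ) ^ (α:ℂ) * z ^ (1 - (α:ℂ))) -
        Complex.exp (-(Complex.exp ((Real.pi * α : ℂ) * Complex.I)) * (y:ℂ) ^ (α:ℂ) * z ^ (1 - (α:ℂ)))) / z) *
      Complex.exp (-(y:ℂ))

/-- The upper boundary value `G_α(-r^+)`. -/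
noncomputable def GalphaPlus (α r : ℝ) : ℂ :=
  (2 * Real.pi * Complex.I)⁻¹ *
    ∫ y in Set.Ioi (0:ℝ),
      ((Complex.exp ((r:ℂ) ^ (1 - (α:ℂ)) * (y:ℂ) ^ (α:ℂ)) -
        Complex.exp (Complex.exp (-(2 * Real.pi * α : ℂ) * Complex.I) * (r:ℂ) ^ (1 - (α:ℂ)) * (y:ℂ) ^ (α:ℂ))) / (r:ℂ)) *
      Complex.exp (-(y:ℂ))

/-- `θ_α(r) = -arg(G_α(-r^+))/π`. -/
noncomputable def thetaFun (α r : ℝ) : ℝ := -(GalphaPlus α r).arg / Real.pi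

/-- Zolotarev's integral formula for the density of the strictly `α`-stable
distribution with positivity parameter `ρ` (the integral is a real number; we take
the real part). -/
noncomputable def stableDensity (α ρ x : ℝ) : ℝ :=
  ((2 * Real.pi * Complex.I)⁻¹ *
    ∫ y in Set.Ioi (0:ℝ),
      ((Complex.exp (-(Complex.exp (-(Real.pi * ρ * α : ℂ) * Complex.I)) * (y:ℂ) ^ (α:ℂ) * (x:ℂ) ^ (-(α:ℂ))) -
        Complex.exp (-(Complex.exp ((Real.pi * ρ * α : ℂ) * Complex.I)) * (y:ℂ) ^ (α:ℂ) * (x:ℂ) ^ (-(α:ℂ)))) / (x:ℂ)) *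
      Complex.exp (-(y:ℂ))).re

/-- A function is completely monotone (on `(0,∞)`) if it is infinitely differentiable
there and `(-1)^n f^{(n)}(x) ≥ 0` for all `n` and `x > 0`. -/
def CompletelyMonotone (φ : ℝ → ℝ) : Prop :=
  ContDiffOn ℝ ⊤ φ (Set.Ioi 0) ∧
  ∀ (n : ℕ) (x : ℝ), 0 < x → 0 ≤ (-1 : ℝ) ^ n * iteratedDeriv n φ x

/-- A function `H` on `(0,∞)` is hyperbolically completely monotone if for every `u > 0`
the function `v ↦ H(uv)H(u/v)` is a completely monotone function of `v + 1/v`. -/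
def HCM (H : ℝ → ℝ) : Prop :=
  ∀ u : ℝ, 0 < u → ∃ φ : ℝ → ℝ, CompletelyMonotone φ ∧
    ∀ v : ℝ, 0 < v → H (u * v) * H (u / v) = φ (v + 1 / v)

/-!
Expanding `exp (z y^α)` as a power series and integrating termwise against `e^{-y}` gives
`∫_0^∞ exp (z y^α) e^{-y} dy = Σ Γ(nα+1) zⁿ / n!`, because `∫_0^∞ y^{nα} e^{-y} dy = Γ(nα+1)`.
The interchange is justified by summability of `Γ(nα+1) |z|ⁿ / n!`, whose terms are at most
`2⁻ⁿ ∫_0^∞ exp (2|z| y^α) e^{-y} dy`, finite since `y^α = o(y)` for `α < 1`.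
`G_α(-r^+)` is `(2πi r)⁻¹` times the difference of two such integrals, with `z = r^{1-α}` and
`z = e^{-2iπα} r^{1-α}`.
-/

open scoped Nat Topology

lemma integrableOn_exp_neg_mul_exp_mul_rpow {α : ℝ} (hα0 : 0 ≤ α) (hα1 : α < 1) (c : ℝ) :
    IntegrableOn (fun y : ℝ => Real.exp (-y) * Real.exp (c * y ^ α)) (Ioi 0) := by
  have hsmall : ∀ᶠ y in atTop, c * y ^ α ≤ y / 2 := by
    have hlim : Tendsto (fun y : ℝ => c * y ^ (-(1 - α))) atTop (𝓝 0) := by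
      simpa using (tendsto_rpow_neg_atTop (by linarith : 0 < 1 - α)).const_mul c
    filter_upwards [hlim.eventually (gt_mem_nhds one_half_pos), eventually_gt_atTop 0]
      with y hy hy0
    calc c * y ^ α = c * y ^ (-(1 - α)) * y := by
          rw [mul_assoc, ← Real.rpow_add_one hy0.ne']; ring_nf
      _ ≤ 1 / 2 * y := by gcongr
      _ = y / 2 := by ring
  have hcont : Continuous fun y : ℝ => Real.exp (-y) * Real.exp (c * y ^ α) := by
    have := Real.continuous_rpow_const hα0; fun_prop
  refine integrable_of_isBigO_exp_neg one_half_pos hcont.continuousOn ?_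
  simp_rw [← Real.exp_add]
  refine Real.isBigO_exp_comp_exp_comp.mpr (isBoundedUnder_of_eventually_le (a := 0) ?_)
  filter_upwards [hsmall] with y hy
  simp only [Pi.sub_apply]
  linarith

lemma Gamma_mul_add_one_eq_integral {α : ℝ} (hα0 : 0 ≤ α) (n : ℕ) :
    Real.Gamma (α * n + 1) = ∫ y in Ioi 0, Real.exp (-y) * (y ^ α) ^ n := by
  rw [Real.Gamma_eq_integral (by positivity), add_sub_cancel_right]
  refine setIntegral_congr_fun measurableSet_Ioi fun y hy => ?_
  rw [Real.rpow_mul_natCast (le_of_lt hy)]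

lemma integrableOn_exp_neg_mul_rpow_pow {α : ℝ} (hα0 : 0 ≤ α) (n : ℕ) :
    IntegrableOn (fun y : ℝ => Real.exp (-y) * (y ^ α) ^ n) (Ioi 0) := by
  refine (Real.GammaIntegral_convergent (s := α * n + 1) (by positivity)).congr_fun
    (fun y hy => ?_) measurableSet_Ioi
  simp only [add_sub_cancel_right, Real.rpow_mul_natCast (le_of_lt hy)]

lemma pow_div_factorial_mul_Gamma_le {α c : ℝ} (hα0 : 0 ≤ α) (hα1 : α < 1) (hc : 0 ≤ c)
    (n : ℕ) :
    c ^ n / n ! * Real.Gamma (α * n + 1) ≤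
      ∫ y in Ioi 0, Real.exp (-y) * Real.exp (c * y ^ α) := by
  rw [Gamma_mul_add_one_eq_integral hα0, ← integral_const_mul]
  refine setIntegral_mono_on ((integrableOn_exp_neg_mul_rpow_pow hα0 n).const_mul _)
    (integrableOn_exp_neg_mul_exp_mul_rpow hα0 hα1 c) measurableSet_Ioi fun y hy => ?_
  have hexp := Real.pow_div_factorial_le_exp (x := c * y ^ α)
    (mul_nonneg hc (Real.rpow_nonneg (le_of_lt hy) α)) n
  rw [mul_left_comm]
  gcongr
  rwa [mul_pow, mul_div_right_comm] at hexp

lemma summable_pow_div_factorial_mul_Gamma {α c : ℝ} (hα0 : 0 ≤ α) (hα1 : α < 1)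
    (hc : 0 ≤ c) : Summable fun n : ℕ => c ^ n / n ! * Real.Gamma (α * n + 1) := by
  have hG : ∀ n : ℕ, 0 ≤ Real.Gamma (α * n + 1) := fun n =>
    (Real.Gamma_pos_of_pos (by positivity)).le
  refine Summable.of_nonneg_of_le (fun n => by have := hG n; positivity) (fun n => ?_)
    (summable_geometric_two.mul_right
      (∫ y in Ioi 0, Real.exp (-y) * Real.exp (2 * c * y ^ α)))
  calc c ^ n / n ! * Real.Gamma (α * n + 1)
      = (1 / 2) ^ n * ((2 * c) ^ n / n ! * Real.Gamma (α * n + 1)) := by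
        rw [mul_pow]; field_simp; rw [mul_assoc, ← mul_pow]; norm_num
    _ ≤ _ := by
        gcongr
        exact pow_div_factorial_mul_Gamma_le hα0 hα1 (by positivity) n

lemma norm_cexp_mul_cpow_le {y : ℝ} (hy : 0 ≤ y) (α : ℝ) (z : ℂ) :
    ‖Complex.exp (z * (y : ℂ) ^ (α : ℂ))‖ ≤ Real.exp (‖z‖ * y ^ α) := by
  refine (norm_exp_le_exp_norm _).trans_eq ?_
  rw [← ofReal_cpow hy, norm_mul, norm_real, Real.norm_of_nonneg (Real.rpow_nonneg hy α)]

lemma integrableOn_cexp_mul_cpow_mul_cexp_neg {α : ℝ} (hα0 : 0 ≤ α) (hα1 : α < 1) (z : ℂ) :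
    IntegrableOn (fun y : ℝ => Complex.exp (z * (y : ℂ) ^ (α : ℂ)) * Complex.exp (-y))
      (Ioi 0) := by
  refine (integrableOn_exp_neg_mul_exp_mul_rpow hα0 hα1 ‖z‖).mono'
    (by fun_prop : Measurable _).aestronglyMeasurable
    ((ae_restrict_iff' measurableSet_Ioi).mpr (ae_of_all _ fun y hy => ?_))
  rw [norm_mul, ← ofReal_neg, norm_exp_ofReal, mul_comm]
  gcongr
  exact norm_cexp_mul_cpow_le (le_of_lt hy) α z

theorem hasSum_integral_cexp_mul_cpow_mul_cexp_neg {α : ℝ} (hα0 : 0 ≤ α) (hα1 : α < 1)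
    (z : ℂ) :
    HasSum (fun n : ℕ => z ^ n / n ! * Real.Gamma (α * n + 1))
      (∫ y in Ioi (0 : ℝ), Complex.exp (z * (y : ℂ) ^ (α : ℂ)) * Complex.exp (-y)) := by
  set F : ℕ → ℝ → ℂ := fun n y => z ^ n / n ! * ((Real.exp (-y) * (y ^ α) ^ n : ℝ) : ℂ)
  have hF_int : ∀ n, Integrable (F n) (volume.restrict (Ioi 0)) := fun n =>
    (integrableOn_exp_neg_mul_rpow_pow hα0 n).ofReal.const_mul _
  have hF_norm : ∀ n, ∫ y in Ioi 0, ‖F n y‖ = ‖z‖ ^ n / n ! * Real.Gamma (α * n + 1) := by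
    intro n
    rw [Gamma_mul_add_one_eq_integral hα0, ← integral_const_mul]
    refine setIntegral_congr_fun measurableSet_Ioi fun y hy => ?_
    have : 0 ≤ Real.exp (-y) * (y ^ α) ^ n := by
      have := Real.rpow_nonneg (le_of_lt hy) α; positivity
    simp only [F, norm_mul, norm_div, norm_pow, Complex.norm_natCast, norm_real,
      Real.norm_of_nonneg this]
  have hF_sum : ∀ y ∈ Ioi (0 : ℝ),
      HasSum (F · y) (Complex.exp (z * (y : ℂ) ^ (α : ℂ)) * Complex.exp (-y)) := by
    intro y hy
    have hexp := (NormedSpace.expSeries_div_hasSum_exp (z * (y : ℂ) ^ (α : ℂ))).mul_right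
      (Complex.exp (-y))
    rw [← Complex.exp_eq_exp_ℂ] at hexp
    refine (funext fun n => ?_ : (F · y) = _) ▸ hexp
    simp only [F, ofReal_mul, ofReal_pow, ofReal_exp, ofReal_neg, ofReal_cpow (le_of_lt hy)]
    ring
  have hsum := hasSum_integral_of_summable_integral_norm hF_int
    (by simpa only [hF_norm] using summable_pow_div_factorial_mul_Gamma hα0 hα1 (norm_nonneg z))
  have hF_integral : ∀ n, ∫ y in Ioi 0, F n y = z ^ n / n ! * Real.Gamma (α * n + 1) := by
    intro n
    rw [integral_const_mul, integral_complex_ofReal, ← Gamma_mul_add_one_eq_integral hα0]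
  rw [setIntegral_congr_fun measurableSet_Ioi fun y hy => (hF_sum y hy).tsum_eq.symm]
  simpa only [hF_integral] using hsum

lemma GalphaPlus_eq_mul_sub_integral {α r : ℝ} (hα0 : 0 ≤ α) (hα1 : α < 1) :
    GalphaPlus α r = (2 * Real.pi * Complex.I)⁻¹ * (r : ℂ)⁻¹ *
      ((∫ y in Ioi (0 : ℝ), Complex.exp ((r : ℂ) ^ (1 - (α : ℂ)) * (y : ℂ) ^ (α : ℂ)) *
          Complex.exp (-y)) -
        ∫ y in Ioi (0 : ℝ), Complex.exp (Complex.exp (-(2 * Real.pi * α : ℂ) * Complex.I) *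
          (r : ℂ) ^ (1 - (α : ℂ)) * (y : ℂ) ^ (α : ℂ)) * Complex.exp (-y)) := by
  rw [← integral_sub (integrableOn_cexp_mul_cpow_mul_cexp_neg hα0 hα1 _)
    (integrableOn_cexp_mul_cpow_mul_cexp_neg hα0 hα1 _), ← integral_const_mul, GalphaPlus,
    ← integral_const_mul]
  refine congrArg _ (funext fun y => ?_)
  ring

/-- Series expansion of the boundary value:
`G_α(-r^+) = (2πi)⁻¹ Σ_{n≥1} (Γ(nα+1)/Γ(n+1)) (1 - e^{-2iπnα}) r^{n(1-α)-1}`. -/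
theorem GalphaPlus_series_expansion (α r : ℝ) (hα : α ∈ Set.Ioo (0:ℝ) 1) (hr : 0 < r) :
    HasSum
      (fun n : ℕ =>
        (2 * Real.pi * Complex.I)⁻¹ *
          ((Real.Gamma (((n:ℝ) + 1) * α + 1) / Real.Gamma (((n:ℝ) + 1) + 1) : ℝ) : ℂ) *
          (1 - Complex.exp (-(2 * Real.pi * ((n:ℝ) + 1) * α : ℂ) * Complex.I)) *
          ((r ^ (((n:ℝ) + 1) * (1 - α) - 1) : ℝ) : ℂ))
      (GalphaPlus α r) := by
  obtain ⟨hα0, hα1⟩ := hα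
  set E : ℂ := Complex.exp (-(2 * Real.pi * α : ℂ) * Complex.I)
  have hρ : (r : ℂ) ^ (1 - (α : ℂ)) = ((r ^ (1 - α) : ℝ) : ℂ) := by
    rw [ofReal_cpow hr.le]; push_cast; rfl
  have hdiff := (hasSum_integral_cexp_mul_cpow_mul_cexp_neg hα0.le hα1
      ((r : ℂ) ^ (1 - (α : ℂ)))).sub
    (hasSum_integral_cexp_mul_cpow_mul_cexp_neg hα0.le hα1 (E * (r : ℂ) ^ (1 - (α : ℂ))))
  -- both series start with the term `1`, which cancels
  have hshift := ((hasSum_nat_add_iff' 1).mpr hdiff).mul_left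
    ((2 * Real.pi * Complex.I)⁻¹ * (r : ℂ)⁻¹)
  simp only [Finset.range_one, Finset.sum_singleton, pow_zero, sub_self, sub_zero] at hshift
  rw [GalphaPlus_eq_mul_sub_integral hα0.le hα1]
  refine hshift.congr_fun fun n => ?_
  have hfact : Real.Gamma (((n : ℝ) + 1) + 1) = (n + 1) ! := by
    exact_mod_cast Real.Gamma_nat_eq_factorial (n + 1)
  have hE : Complex.exp (-(2 * Real.pi * ((n : ℝ) + 1) * α : ℂ) * Complex.I) = E ^ (n + 1) := by
    rw [← Complex.exp_nat_mul]; push_cast; ring_nf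
  have hr_pow : r ^ (((n : ℝ) + 1) * (1 - α) - 1) = (r ^ (1 - α)) ^ (n + 1) / r := by
    rw [Real.rpow_sub hr, Real.rpow_one, ← Real.rpow_mul_natCast hr.le]; push_cast; ring_nf
  rw [hfact, hE, hr_pow, hρ]
  push_cast
  field_simp
  ring
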